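/- For every monotone function f : Ω → Ω and all countable ordinals α and γ, applying the type-(Ω→Ω) iteration functional to the base-type iteration functional corresponds to ordinal exponentiation: Iter_α^{Ω→Ω}(Iter_γ^Ω)(f) = Iter_{γ^α}^Ω(f), where γ^α is ordinal exponentiation. Here Iter_α^{Ω→Ω} iterates the operator Iter_γ^Ω on the set of monotone functions Ω → Ω (ordered pointwise, with limsup at limit stages computed pointwise). -/

import Mathlib

/-!  Framework: finite type structure over Ω = countable ordinals,
     limsup/liminf, transfinite iteration functionals, hereditarily
     positive and hereditarily monotone functionals. -/

noncomputable section
namespace IterOrd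

open Ordinal

theorem omega1_pos : (0 : Ordinal) < ω₁ := Ordinal.omega0_pos.trans Ordinal.omega0_lt_omega_one

/-- `Om` is Ω, the set of countable ordinals (ordinals `< ω₁`). -/
abbrev Om : Type 1 := {o : Ordinal // o < ω₁}

/-- Infimum of a subset of Ω (the minimum for nonempty sets; `0` for `∅`). -/
def infOm (s : Set Om) : Om :=
  ⟨sInf (Subtype.val '' s), by
    rcases (Subtype.val '' s).eq_empty_or_nonempty with h | h
    · rw [h]; simpa using omega1_pos
    · obtain ⟨x, _, he⟩ := csInf_mem h
      exact he ▸ x.2⟩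

/-- Supremum of a subset of Ω.  Whenever the supremum of the set exists in Ω
(in particular for every countable subset, by regularity of `ω₁`) this is the
genuine supremum; otherwise it takes a junk value. -/
def supOm (s : Set Om) : Om :=
  if h : sSup (Subtype.val '' s) < ω₁ then ⟨sSup (Subtype.val '' s), h⟩ else ⟨0, omega1_pos⟩

/-- Finite types over the base type `o` (interpreted as Ω). -/
inductive Ty : Type
  | base : Ty
  | arrow : Ty → Ty → Ty
deriving DecidableEq

/-- The full type structure over Ω: `El base = Ω` and
`El (arrow σ τ)` is the set of all functions `El σ → El τ`. -/
@[reducible] def El : Ty → Type 1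
  | .base => Om
  | .arrow σ τ => El σ → El τ

/-- The order on each `El σ`: the ordinal order at base type, pointwise at arrow types. -/
def Le : (σ : Ty) → El σ → El σ → Prop
  | .base => fun x y => x ≤ y
  | .arrow σ τ => fun f g => ∀ x : El σ, Le τ (f x) (g x)

/-- Suprema, computed pointwise at function types. -/
def supEl : (σ : Ty) → Set (El σ) → El σ
  | .base => supOm
  | .arrow σ τ => fun S (x : El σ) => supEl τ ((fun f : El (.arrow σ τ) => f x) '' S)

/-- Infima, computed pointwise at function types. -/
def infEl : (σ : Ty) → Set (El σ) → El σ
  | .base => infOm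
  | .arrow σ τ => fun S (x : El σ) => infEl τ ((fun f : El (.arrow σ τ) => f x) '' S)

/-- `limsup_{ξ→ζ} f ξ = inf_{γ<ζ} sup_{γ≤ξ<ζ} f ξ`. -/
def limsupEl (σ : Ty) (ζ : Ordinal) (f : ∀ ξ : Ordinal, ξ < ζ → El σ) : El σ :=
  infEl σ {y | ∃ γ, ∃ _ : γ < ζ, y = supEl σ {z | ∃ ξ, ∃ h : ξ < ζ, γ ≤ ξ ∧ z = f ξ h}}

/-- `liminf_{ξ→ζ} f ξ = sup_{γ<ζ} inf_{γ≤ξ<ζ} f ξ`. -/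
def liminfEl (σ : Ty) (ζ : Ordinal) (f : ∀ ξ : Ordinal, ξ < ζ → El σ) : El σ :=
  supEl σ {y | ∃ γ, ∃ _ : γ < ζ, y = infEl σ {z | ∃ ξ, ∃ h : ξ < ζ, γ ≤ ξ ∧ z = f ξ h}}

/-- `limsup` of a ζ-indexed sequence of ordinals. -/
def oLimsup (ζ : Ordinal) (a : Ordinal → Ordinal) : Ordinal :=
  sInf {s | ∃ γ, γ < ζ ∧ s = sSup (a '' {ξ | γ ≤ ξ ∧ ξ < ζ})}

/-- `liminf` of a ζ-indexed sequence of ordinals. -/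
def oLiminf (ζ : Ordinal) (a : Ordinal → Ordinal) : Ordinal :=
  sSup {s | ∃ γ, γ < ζ ∧ s = sInf (a '' {ξ | γ ≤ ξ ∧ ξ < ζ})}

/-- The α-iteration functional of type σ:
`Iter 0 f x = x`, `Iter (α+1) f x = f (Iter α f x)`, and
`Iter μ f x = limsup_{ξ→μ} Iter ξ f x` for limit μ. -/
def Iter (σ : Ty) (α : Ordinal) : (El σ → El σ) → El σ → El σ :=
  Ordinal.limitRecOn (motive := fun _ => (El σ → El σ) → El σ → El σ) α
    (fun _ x => x)
    (fun _ ih f x => f (ih f x))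
    (fun μ _ ih f x => limsupEl σ μ (fun ξ h => ih ξ h f x))

/-- The pair (hereditarily positive, ≤hp), defined simultaneously by recursion on the type.
Every element of `Ω` and of `Ω_{ρ→τ}` with `ρ ≠ τ` is h.p., and `≤hp` there is `≤`;
`f : Ω_{τ→τ}` is h.p. iff it preserves h.p., is inflationary on h.p. arguments and is
monotone (w.r.t. `≤hp`) on h.p. arguments; `f ≤hp f'` on `Ω_{τ→τ}` iff `f x ≤hp f' x`
for every h.p. `x`. -/
def HPaux : (σ : Ty) → (El σ → Prop) × (El σ → El σ → Prop)
  | .base => ⟨fun _ => True, fun x y => x ≤ y⟩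
  | .arrow ρ τ =>
      ⟨fun f =>
        if h : ρ = τ then
          (∀ x, (HPaux ρ).1 x → (HPaux τ).1 (f x)) ∧
          (∀ x, (HPaux ρ).1 x → (HPaux τ).2 (cast (congrArg El h) x) (f x)) ∧
          (∀ x y, (HPaux ρ).1 x → (HPaux ρ).1 y → (HPaux ρ).2 x y → (HPaux τ).2 (f x) (f y))
        else True,
       fun f g =>
        if ρ = τ then ∀ x, (HPaux ρ).1 x → (HPaux τ).2 (f x) (g x)
        else Le (.arrow ρ τ) f g⟩

/-- Hereditarily positive functionals. -/
def Hp (σ : Ty) : El σ → Prop := (HPaux σ).1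

/-- The order `≤hp`. -/
def HpLe (σ : Ty) : El σ → El σ → Prop := (HPaux σ).2

/-- `f =hp g` iff `f ≤hp g` and `g ≤hp f`. -/
def HpEq (σ : Ty) (f g : El σ) : Prop := HpLe σ f g ∧ HpLe σ g f

/-- The pair (hereditarily monotone, ≤ on the hereditarily monotone structure),
by recursion on the type.  `f` is hereditarily monotone iff it maps hereditarily
monotone arguments to hereditarily monotone values, monotonically; the order is
pointwise over hereditarily monotone arguments (i.e. the order of `Ω^mon`). -/
def HMaux : (σ : Ty) → (El σ → Prop) × (El σ → El σ → Prop)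
  | .base => ⟨fun _ => True, fun x y => x ≤ y⟩
  | .arrow σ τ =>
      ⟨fun f =>
        (∀ x, (HMaux σ).1 x → (HMaux τ).1 (f x)) ∧
        (∀ x y, (HMaux σ).1 x → (HMaux σ).1 y → (HMaux σ).2 x y → (HMaux τ).2 (f x) (f y)),
       fun f g => ∀ x, (HMaux σ).1 x → (HMaux τ).2 (f x) (g x)⟩

/-- Hereditarily monotone functionals: the members of the type structure `Ω^mon`. -/
def HM (σ : Ty) : El σ → Prop := (HMaux σ).1

/-- The (pointwise) order of the hereditarily monotone type structure `Ω^mon`. -/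
def LeHM (σ : Ty) : El σ → El σ → Prop := (HMaux σ).2

/-- Equality in the hereditarily monotone type structure `Ω^mon`. -/
def EqHM (σ : Ty) (f g : El σ) : Prop := LeHM σ f g ∧ LeHM σ g f

/-!
For monotone `f`, the orbit `β ↦ Iter β f x` is increasing when `x ≤ f x`, so that its value at
a limit is a supremum; when `f x ≤ x` it reaches a fixed point after finitely many steps and is
constant from then on. Either way, the limsup of the orbit along a monotone cofinal
reparametrisation of a limit `ν` is its value at `ν`. This gives `Iter (δ + η) = Iter η ∘ Iter δ`,
then `Iter c (Iter δ f) = Iter (δ * c) f`, and finally the theorem by induction on `α`, the limsup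
at type `Ω → Ω` being computed pointwise. All ordinals involved are countable, which keeps every
`supOm` a genuine supremum.
-/

open Set Function

theorem countable_Iio_of_lt_omega_one {o : Ordinal} (ho : o < ω₁) : (Iio o).Countable := by
  rw [← Cardinal.le_aleph0_iff_set_countable, Cardinal.mk_Iio_ordinal, Cardinal.lift_le_aleph0,
    ← Cardinal.lt_aleph_one_iff, ← Cardinal.lt_omega_iff_card_lt]
  exact ho

theorem sSup_val_lt_omega_one {s : Set Om} (hs : s.Countable) : sSup (Subtype.val '' s) < ω₁ := by
  have := hs.to_subtype
  rw [sSup_image']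
  exact Ordinal.iSup_lt_omega_one fun a => a.1.2

theorem le_supOm {s : Set Om} (hs : s.Countable) {a : Om} (ha : a ∈ s) : a ≤ supOm s := by
  rw [supOm, dif_pos (sSup_val_lt_omega_one hs)]
  exact le_csSup ⟨ω₁, forall_mem_image.2 fun b _ => b.2.le⟩ (mem_image_of_mem _ ha)

theorem supOm_le {s : Set Om} {b : Om} (h : ∀ a ∈ s, a ≤ b) : supOm s ≤ b := by
  unfold supOm
  split_ifs
  · exact show sSup _ ≤ b.1 from csSup_le' (forall_mem_image.2 fun a ha => h a ha)
  · exact show (0 : Ordinal) ≤ b.1 from zero_le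

theorem supOm_le_supOm {s t : Set Om} (ht : t.Countable) (h : ∀ a ∈ s, ∃ b ∈ t, a ≤ b) :
    supOm s ≤ supOm t :=
  supOm_le fun a ha => let ⟨_, hb, hab⟩ := h a ha; hab.trans (le_supOm ht hb)

theorem infOm_le {s : Set Om} {a : Om} (ha : a ∈ s) : infOm s ≤ a :=
  show sInf _ ≤ a.1 from csInf_le (OrderBot.bddBelow _) (mem_image_of_mem _ ha)

theorem le_infOm {s : Set Om} (hs : s.Nonempty) {b : Om} (h : ∀ a ∈ s, b ≤ a) : b ≤ infOm s :=
  show b.1 ≤ sInf _ from le_csInf (hs.image _) (forall_mem_image.2 fun a ha => h a ha)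

theorem limsupEl_base_eq (μ : Ordinal) (A : Ordinal → Om) :
    limsupEl .base μ (fun ξ _ => A ξ) = infOm ((fun γ => supOm (A '' Ico γ μ)) '' Iio μ) := by
  simp only [limsupEl, infEl, supEl]
  have tail (γ : Ordinal) : {z | ∃ ξ, ∃ _ : ξ < μ, γ ≤ ξ ∧ z = A ξ} = A '' Ico γ μ := by
    ext z
    constructor
    · rintro ⟨ξ, hξμ, hγξ, rfl⟩
      exact ⟨ξ, ⟨hγξ, hξμ⟩, rfl⟩
    · rintro ⟨ξ, ⟨hγξ, hξμ⟩, rfl⟩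
      exact ⟨ξ, hξμ, hγξ, rfl⟩
  simp only [tail]
  congr
  ext y
  constructor
  · rintro ⟨γ, hγ, rfl⟩
    exact ⟨γ, hγ, rfl⟩
  · rintro ⟨γ, hγ, rfl⟩
    exact ⟨γ, hγ, rfl⟩

theorem limsupEl_arrow_apply (σ τ : Ty) (μ : Ordinal) (F : ∀ ξ : Ordinal, ξ < μ → El (.arrow σ τ))
    (x : El σ) : limsupEl (.arrow σ τ) μ F x = limsupEl τ μ (fun ξ h => F ξ h x) := by
  simp only [limsupEl, infEl, supEl]
  have tail (γ : Ordinal) : (fun f : El (.arrow σ τ) => f x) ''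
      {z | ∃ ξ, ∃ h : ξ < μ, γ ≤ ξ ∧ z = F ξ h} = {z | ∃ ξ, ∃ h : ξ < μ, γ ≤ ξ ∧ z = F ξ h x} := by
    ext z
    constructor
    · rintro ⟨_, ⟨ξ, hξμ, hγξ, rfl⟩, rfl⟩
      exact ⟨ξ, hξμ, hγξ, rfl⟩
    · rintro ⟨ξ, hξμ, hγξ, rfl⟩
      exact ⟨_, ⟨ξ, hξμ, hγξ, rfl⟩, rfl⟩
  congr
  ext y
  constructor
  · rintro ⟨_, ⟨γ, hγ, rfl⟩, rfl⟩
    exact ⟨γ, hγ, tail γ ▸ rfl⟩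
  · rintro ⟨γ, hγ, rfl⟩
    exact ⟨_, ⟨γ, hγ, rfl⟩, tail γ ▸ rfl⟩

theorem countable_image_Ico {μ : Ordinal} (hμ : μ < ω₁) (A : Ordinal → Om) (γ : Ordinal) :
    (A '' Ico γ μ).Countable :=
  ((countable_Iio_of_lt_omega_one hμ).mono Ico_subset_Iio_self).image A

theorem limsupEl_base_of_eventually_eq {μ n : Ordinal} (hμ : μ < ω₁) (hn : n < μ)
    {A : Ordinal → Om} {y : Om} (hA : ∀ ξ, n ≤ ξ → ξ < μ → A ξ = y) :
    limsupEl .base μ (fun ξ _ => A ξ) = y := by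
  rw [limsupEl_base_eq]
  apply le_antisymm
  · refine (infOm_le (mem_image_of_mem _ (mem_Iio.2 hn))).trans (supOm_le ?_)
    rintro _ ⟨ξ, ⟨hnξ, hξμ⟩, rfl⟩
    exact (hA ξ hnξ hξμ).le
  · refine le_infOm ⟨_, mem_image_of_mem _ (mem_Iio.2 hn)⟩ ?_
    rintro _ ⟨γ, hγ, rfl⟩
    have hmax : max γ n ∈ Ico γ μ := ⟨le_max_left _ _, max_lt hγ hn⟩
    calc y = A (max γ n) := (hA _ (le_max_right _ _) hmax.2).symm
      _ ≤ _ := le_supOm (countable_image_Ico hμ A γ) (mem_image_of_mem A hmax)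

theorem limsupEl_base_of_monotoneOn {μ : Ordinal} (hμ : μ < ω₁) (hpos : 0 < μ)
    {A : Ordinal → Om} (hA : MonotoneOn A (Iio μ)) :
    limsupEl .base μ (fun ξ _ => A ξ) = supOm (A '' Iio μ) := by
  rw [limsupEl_base_eq]
  apply le_antisymm
  · refine (infOm_le (mem_image_of_mem _ (mem_Iio.2 hpos))).trans (le_of_eq ?_)
    simp only [← bot_eq_zero, Ico_bot]
  · refine le_infOm ⟨_, mem_image_of_mem _ (mem_Iio.2 hpos)⟩ ?_
    rintro _ ⟨γ, hγ, rfl⟩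
    refine supOm_le_supOm (countable_image_Ico hμ A γ) ?_
    rintro _ ⟨ξ, hξ, rfl⟩
    exact ⟨A (max ξ γ), mem_image_of_mem A ⟨le_max_right _ _, max_lt hξ hγ⟩,
      hA hξ (mem_Iio.2 (max_lt hξ hγ)) (le_max_left _ _)⟩

theorem image_add_left_Ico (δ β η : Ordinal) : (δ + ·) '' Ico β η = Ico (δ + β) (δ + η) := by
  ext ρ
  constructor
  · rintro ⟨ξ, ⟨hβξ, hξη⟩, rfl⟩
    exact ⟨add_le_add_right hβξ δ, add_lt_add_right hξη δ⟩
  · rintro ⟨hβρ, hρη⟩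
    have hδρ : δ ≤ ρ := le_self_add.trans hβρ
    rw [← Ordinal.add_sub_cancel_of_le hδρ] at hβρ hρη ⊢
    exact mem_image_of_mem _ ⟨(add_le_add_iff_left δ).1 hβρ, (add_lt_add_iff_left δ).1 hρη⟩

theorem limsupEl_base_add {δ η : Ordinal} (hη : 0 < η) (h : δ + η < ω₁) (A : Ordinal → Om) :
    limsupEl .base (δ + η) (fun ξ _ => A ξ) = limsupEl .base η (fun ξ _ => A (δ + ξ)) := by
  have hshift (β : Ordinal) :
      (fun ξ => A (δ + ξ)) '' Ico β η = A '' Ico (δ + β) (δ + η) := by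
    rw [← image_add_left_Ico, image_image]
  simp only [limsupEl_base_eq, hshift]
  apply le_antisymm
  · refine le_infOm ⟨_, mem_image_of_mem _ (mem_Iio.2 hη)⟩ ?_
    rintro _ ⟨β, hβ, rfl⟩
    exact infOm_le (mem_image_of_mem _ (mem_Iio.2 (add_lt_add_right hβ δ)))
  · refine le_infOm ⟨_, mem_image_of_mem _ (mem_Iio.2 (hη.trans_le le_add_self))⟩ ?_
    rintro _ ⟨γ, hγ, rfl⟩
    obtain ⟨β, hβ, hβγ⟩ : ∃ β < η,
        supOm (A '' Ico (δ + β) (δ + η)) ≤ supOm (A '' Ico γ (δ + η)) := by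
      rcases le_or_gt δ γ with hδγ | hγδ
      · rw [← Ordinal.add_sub_cancel_of_le hδγ] at hγ ⊢
        exact ⟨γ - δ, (add_lt_add_iff_left δ).1 hγ, le_rfl⟩
      · refine ⟨0, hη, supOm_le_supOm (countable_image_Ico h A γ) fun a ha => ⟨a, ?_, le_rfl⟩⟩
        rw [add_zero] at ha
        exact image_mono (Ico_subset_Ico_left hγδ.le) ha
    exact (infOm_le (mem_image_of_mem _ (mem_Iio.2 hβ))).trans hβγ

theorem iter_zero (σ : Ty) (F : El σ → El σ) (x : El σ) : Iter σ 0 F x = x := by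
  rw [Iter, limitRecOn_zero]

theorem iter_add_one (σ : Ty) (α : Ordinal) (F : El σ → El σ) (x : El σ) :
    Iter σ (α + 1) F x = F (Iter σ α F x) := by
  rw [Iter, limitRecOn_add_one, Iter]

theorem iter_limit (σ : Ty) {μ : Ordinal} (hμ : Order.IsSuccLimit μ) (F : El σ → El σ)
    (x : El σ) : Iter σ μ F x = limsupEl σ μ (fun ξ _ => Iter σ ξ F x) := by
  rw [Iter, limitRecOn_limit _ _ _ _ hμ]
  rfl

theorem iter_add (f : Om → Om) (x : Om) {δ η : Ordinal} (h : δ + η < ω₁) :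
    Iter .base (δ + η) f x = Iter .base η f (Iter .base δ f x) := by
  induction η using Ordinal.limitRecOn with
  | zero => rw [add_zero, iter_zero]
  | add_one η ih =>
    rw [← add_assoc, iter_add_one, iter_add_one, ih ((add_lt_add_right (lt_add_one η) δ).trans h)]
  | limit η hη ih =>
    rw [iter_limit _ (isSuccLimit_add δ hη), iter_limit _ hη, limsupEl_base_add hη.pos h]
    congr
    funext ξ hξ
    exact ih ξ hξ ((add_lt_add_right hξ δ).trans h)

theorem iter_of_isFixedPt {f : Om → Om} {y : Om} (hy : IsFixedPt f y) {β : Ordinal}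
    (hβ : β < ω₁) : Iter .base β f y = y := by
  induction β using Ordinal.limitRecOn with
  | zero => exact iter_zero _ _ _
  | add_one β ih => rw [iter_add_one, ih ((lt_add_one β).trans hβ), hy.eq]
  | limit β hl ih =>
    rw [iter_limit _ hl]
    exact limsupEl_base_of_eventually_eq hβ hl.pos fun ξ _ hξ => ih ξ hξ (hξ.trans hβ)

theorem iter_eq_of_isFixedPt_iter {f : Om → Om} {x : Om} {n β : Ordinal}
    (hn : IsFixedPt f (Iter .base n f x)) (hnβ : n ≤ β) (hβ : β < ω₁) :
    Iter .base β f x = Iter .base n f x := by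
  obtain ⟨θ, rfl⟩ := exists_add_of_le hnβ
  rw [iter_add f x hβ, iter_of_isFixedPt hn (le_add_self.trans_lt hβ)]

theorem monotoneOn_Iic_of_Iio {α β : Type*} [LinearOrder α] [Preorder β] {f : α → β} {b : α}
    (hf : MonotoneOn f (Iio b)) (hb : ∀ a < b, f a ≤ f b) : MonotoneOn f (Iic b) := by
  intro a ha c hc hac
  rcases (mem_Iic.1 hc).lt_or_eq with hcb | rfl
  · exact hf (hac.trans_lt hcb) hcb hac
  · rcases hac.lt_or_eq with hac | rfl
    exacts [hb a hac, le_rfl]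

theorem iter_le_apply_iter {f : Om → Om} (hf : Monotone f) {x : Om} (hx : x ≤ f x)
    {β : Ordinal} (hβ : β < ω₁) (hmono : MonotoneOn (fun ξ => Iter .base ξ f x) (Iic β)) :
    Iter .base β f x ≤ f (Iter .base β f x) := by
  rcases zero_or_succ_or_isSuccLimit β with rfl | ⟨β, rfl⟩ | hl
  · rwa [iter_zero]
  · rw [Order.succ_eq_add_one] at hmono ⊢
    have hle : Iter .base β f x ≤ Iter .base (β + 1) f x :=
      hmono (mem_Iic.2 le_self_add) self_mem_Iic le_self_add
    rw [iter_add_one] at hle ⊢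
    exact hf hle
  · have hsup : Iter .base β f x = supOm ((fun ξ => Iter .base ξ f x) '' Iio β) := by
      rw [iter_limit .base hl,
        limsupEl_base_of_monotoneOn hβ hl.pos (hmono.mono Iio_subset_Iic_self)]
    refine hsup.trans_le (supOm_le (forall_mem_image.2 fun ξ hξ => ?_))
    have hξ1 : ξ + 1 < β := Order.succ_eq_add_one ξ ▸ hl.succ_lt hξ
    calc Iter .base ξ f x ≤ Iter .base (ξ + 1) f x :=
          hmono (mem_Iic.2 (le_self_add.trans hξ1.le)) (mem_Iic.2 hξ1.le) le_self_add
      _ = f (Iter .base ξ f x) := iter_add_one _ _ _ _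
      _ ≤ f (Iter .base β f x) := hf (hmono (mem_Iic.2 (le_of_lt hξ)) self_mem_Iic (le_of_lt hξ))

theorem monotoneOn_iter {f : Om → Om} (hf : Monotone f) {x : Om} (hx : x ≤ f x) :
    MonotoneOn (fun β => Iter .base β f x) (Iio ω₁) := by
  suffices h : ∀ β < ω₁, MonotoneOn (fun ξ => Iter .base ξ f x) (Iic β) from
    fun a _ b hb hab => h b hb (mem_Iic.2 hab) self_mem_Iic hab
  intro β
  induction β using Ordinal.limitRecOn with
  | zero =>
    intro _ a ha b hb _
    rw [mem_Iic, nonpos_iff_eq_zero] at ha hb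
    rw [ha, hb]
  | add_one β ih =>
    intro hβ
    have hmono := ih ((lt_add_one β).trans hβ)
    have hstep := (iter_le_apply_iter hf hx ((lt_add_one β).trans hβ) hmono).trans_eq
      (iter_add_one .base β f x).symm
    refine monotoneOn_Iic_of_Iio (by rwa [← Order.succ_eq_add_one, Order.Iio_succ]) fun a ha => ?_
    have ha : a ≤ β := Order.lt_add_one_iff.1 ha
    exact (hmono (mem_Iic.2 ha) self_mem_Iic ha).trans hstep
  | limit β hl ih =>
    intro hβ
    have hmono : MonotoneOn (fun ξ => Iter .base ξ f x) (Iio β) :=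
      fun a _ b hb hab => ih b hb (hb.trans hβ) (mem_Iic.2 hab) self_mem_Iic hab
    refine monotoneOn_Iic_of_Iio hmono fun a ha => ?_
    rw [iter_limit .base hl, limsupEl_base_of_monotoneOn hβ hl.pos hmono]
    exact le_supOm ((countable_Iio_of_lt_omega_one hβ).image _) (mem_image_of_mem _ ha)

theorem iter_nat_add_one_le {f : Om → Om} (hf : Monotone f) {x : Om} (hx : f x ≤ x) (n : ℕ) :
    Iter .base ((n : Ordinal) + 1) f x ≤ Iter .base n f x := by
  induction n with
  | zero => simpa only [Nat.cast_zero, iter_add_one, iter_zero] using hx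
  | succ n ih =>
    rw [iter_add_one] at ih
    simp only [Nat.cast_succ, iter_add_one]
    exact hf ih

theorem exists_nat_isFixedPt_iter {f : Om → Om} (hf : Monotone f) {x : Om} (hx : f x ≤ x) :
    ∃ n : ℕ, IsFixedPt f (Iter .base (n : Ordinal) f x) := by
  -- the finite orbit is antitone, so its least element is a fixed point
  let n := argmin fun n : ℕ => Iter .base (n : Ordinal) f x
  refine ⟨n, le_antisymm ?_ ?_⟩
  · exact (iter_add_one .base _ f x).symm.trans_le (iter_nat_add_one_le hf hx n)
  · have hmin := argmin_le (fun n : ℕ => Iter .base (n : Ordinal) f x) (n + 1)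
    rwa [Nat.cast_succ, iter_add_one] at hmin

theorem limsupEl_iter_comp_eq_iter {f : Om → Om} (hf : Monotone f) (x : Om) {μ ν : Ordinal}
    (hμ : μ < ω₁) (hν : Order.IsSuccLimit ν) (hνω : ν < ω₁) {g : Ordinal → Ordinal}
    (hg : MonotoneOn g (Iio μ)) (hgν : MapsTo g (Iio μ) (Iio ν))
    (hcof : ∀ ρ < ν, ∃ ξ < μ, ρ ≤ g ξ) :
    limsupEl .base μ (fun ξ _ => Iter .base (g ξ) f x) = Iter .base ν f x := by
  rcases le_total x (f x) with hx | hx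
  · have horbit := monotoneOn_iter hf hx
    have hgω : MapsTo g (Iio μ) (Iio ω₁) := fun ξ hξ => (hgν hξ).trans hνω
    obtain ⟨ξ₀, hξ₀, -⟩ := hcof 0 hν.pos
    rw [iter_limit .base hν,
      limsupEl_base_of_monotoneOn hνω hν.pos (horbit.mono (Iio_subset_Iio hνω.le)),
      limsupEl_base_of_monotoneOn (A := fun ξ => Iter .base (g ξ) f x) hμ
        (pos_of_gt hξ₀) (horbit.comp hg hgω)]
    apply le_antisymm
    · refine supOm_le_supOm ((countable_Iio_of_lt_omega_one hνω).image _) ?_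
      exact forall_mem_image.2 fun ξ hξ => ⟨_, mem_image_of_mem _ (hgν hξ), le_rfl⟩
    · refine supOm_le_supOm ((countable_Iio_of_lt_omega_one hμ).image _) ?_
      refine forall_mem_image.2 fun ρ hρ => ?_
      obtain ⟨ξ, hξ, hρξ⟩ := hcof ρ hρ
      exact ⟨_, mem_image_of_mem _ hξ, horbit (mem_Iio.2 (hρ.trans hνω)) (hgω hξ) hρξ⟩
  · obtain ⟨n, hn⟩ := exists_nat_isFixedPt_iter hf hx
    have hnν : (n : Ordinal) < ν := (natCast_lt_omega0 n).trans_le (omega0_le_of_isSuccLimit hν)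
    obtain ⟨ξ₀, hξ₀, hnξ₀⟩ := hcof n hnν
    rw [iter_eq_of_isFixedPt_iter hn hnν.le hνω]
    refine limsupEl_base_of_eventually_eq hμ hξ₀ fun ξ hξ₀ξ hξ => ?_
    exact iter_eq_of_isFixedPt_iter hn (hnξ₀.trans (hg hξ₀ hξ hξ₀ξ)) ((hgν hξ).trans hνω)

theorem limsupEl_iter_mul {f : Om → Om} (hf : Monotone f) (x : Om) {δ c : Ordinal} (hδ0 : 0 < δ)
    (hδ : δ < ω₁) (hc : Order.IsSuccLimit c) (hcω : c < ω₁) :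
    limsupEl .base c (fun ξ _ => Iter .base (δ * ξ) f x) = Iter .base (δ * c) f x := by
  refine limsupEl_iter_comp_eq_iter hf x hcω (isSuccLimit_mul_right hδ0 hc)
    (isPrincipal_mul_omega 1 hδ hcω) (fun _ _ _ _ h => mul_le_mul_right h δ)
    (fun ξ hξ => (mul_lt_mul_iff_of_pos_left hδ0).2 hξ) fun ρ hρ => ?_
  obtain ⟨ξ, hξ, hρξ⟩ := (lt_mul_iff_of_isSuccLimit hc).1 hρ
  exact ⟨ξ, hξ, hρξ.le⟩

theorem iter_iter_eq_iter_mul {f : Om → Om} (hf : Monotone f) {δ c : Ordinal} (hδ : δ < ω₁)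
    (hc : c < ω₁) (x : Om) : Iter .base c (Iter .base δ f) x = Iter .base (δ * c) f x := by
  rcases eq_zero_or_pos δ with rfl | hδ0
  · rw [zero_mul, iter_zero]
    exact iter_of_isFixedPt (iter_zero .base f x) hc
  induction c using Ordinal.limitRecOn with
  | zero => rw [mul_zero, iter_zero, iter_zero]
  | add_one c ih =>
    have hc' := (lt_add_one c).trans hc
    rw [iter_add_one, ih hc', mul_add_one,
      iter_add f x (isPrincipal_add_omega 1 (isPrincipal_mul_omega 1 hδ hc') hδ)]
  | limit c hl ih =>
    have hIH : (fun ξ (_ : ξ < c) => Iter .base ξ (Iter .base δ f) x) =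
        fun ξ _ => Iter .base (δ * ξ) f x := by
      funext ξ hξ
      exact ih ξ hξ (hξ.trans hc)
    rw [iter_limit .base hl, hIH, limsupEl_iter_mul hf x hδ0 hδ hl hc]

theorem opow_eq_self_of_le_one {γ ξ : Ordinal} (hγ : γ ≤ 1) (hξ : ξ ≠ 0) : γ ^ ξ = γ := by
  rcases Order.le_one_iff.1 hγ with rfl | rfl <;> simp [hξ]

theorem limsupEl_iter_opow {f : Om → Om} (hf : Monotone f) (x : Om) {γ α : Ordinal}
    (hγ : γ < ω₁) (hα : Order.IsSuccLimit α) (hαω : α < ω₁) :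
    limsupEl .base α (fun ξ _ => Iter .base (γ ^ ξ) f x) = Iter .base (γ ^ α) f x := by
  rcases le_or_gt γ 1 with hγ1 | hγ1
  · refine limsupEl_base_of_eventually_eq hαω
      (one_lt_omega0.trans_le (omega0_le_of_isSuccLimit hα)) fun ξ hξ _ => ?_
    rw [opow_eq_self_of_le_one hγ1 (zero_lt_one.trans_le hξ).ne',
      opow_eq_self_of_le_one hγ1 hα.ne_bot]
  · refine limsupEl_iter_comp_eq_iter hf x hαω (isSuccLimit_opow hγ1 hα)
      (isPrincipal_opow_omega 1 hγ hαω)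
      (fun _ _ _ _ h => opow_le_opow_right (zero_lt_one.trans hγ1) h)
      (fun ξ hξ => (opow_lt_opow_iff_right hγ1).2 hξ) fun ρ hρ => ?_
    obtain ⟨ξ, hξ, hρξ⟩ := (lt_opow_of_isSuccLimit (zero_lt_one.trans hγ1).ne' hα).1 hρ
    exact ⟨ξ, hξ, hρξ.le⟩

/-- For every monotone `f : Ω → Ω` and all countable ordinals `α`, `γ`,
`Iter_α^{Ω→Ω} (Iter_γ^Ω) f = Iter_{γ^α}^Ω f`. -/
theorem iter_iterFun_eq_iter_opow (f : Om → Om) (hf : Monotone f)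
    (α γ : Ordinal) (hα : α < ω₁) (hγ : γ < ω₁) :
    Iter (.arrow .base .base) α (Iter .base γ) f = Iter .base (γ ^ α) f := by
  induction α using Ordinal.limitRecOn with
  | zero =>
    funext x
    rw [iter_zero, opow_zero, ← zero_add 1, iter_add_one, iter_zero]
  | add_one α ih =>
    have hα' := (lt_add_one α).trans hα
    funext x
    rw [iter_add_one, ih hα', iter_iter_eq_iter_mul hf (isPrincipal_opow_omega 1 hγ hα') hγ,
      opow_add_one]
  | limit α hl ih =>
    have hIH : (fun ξ (_ : ξ < α) => Iter (.arrow .base .base) ξ (Iter .base γ) f) =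
        fun ξ _ => Iter .base (γ ^ ξ) f := by
      funext ξ hξ
      exact ih ξ hξ (hξ.trans hα)
    funext x
    rw [iter_limit _ hl, hIH, limsupEl_arrow_apply, limsupEl_iter_opow hf x hγ hl hα]

end IterOrd
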